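/- Let f₁, …, f_m ∈ ℂⁿ. The family is phase retrievable for ℂⁿ (i.e., for all x, y ∈ ℂⁿ, |⟨x,f_k⟩| = |⟨y,f_k⟩| for all k implies x = c y for some unimodular c ∈ ℂ) if and only if there do not exist u, v ∈ ℂⁿ with u ≠ 0, v ≠ 0, Im⟨u,v⟩ = 0, and Re(⟨u,f_k⟩ · conj(⟨v,f_k⟩)) = 0 for all k = 1,…,m. (This is the complex reformulation of the realified condition: no nonzero ξ, η ∈ ℝ^{2n} with ⟨Jξ,η⟩ = 0 and ⟨Φ_k ξ, η⟩ = 0 for all k, where ξ = j(u), η = j(v).) -/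

import Mathlib

/-!
With `x = u + v` and `y = u - v`, the identity `|a + b|² - |a - b|² = 4 Re (a b̄)` turns a pair
`(u, v)` as in the statement into a pair `x ≠ ±y` with the same measurements and `⟨x, y⟩` real.
Phase retrievability forbids exactly such pairs: if `x = c y` with `|c| = 1` and `⟨x, y⟩ = c ‖y‖²`
is real, then `c = ±1`; conversely, replacing `y` by a unimodular multiple makes `⟨x, y⟩` real
without changing the measurements.
-/

open Finset

/-- Standard inner product on `ℂⁿ`, linear in the first argument. -/
noncomputable def cip {n : ℕ} (x y : Fin n → ℂ) : ℂ := ∑ i, x i * starRingEnd ℂ (y i)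

open ComplexConjugate
open scoped InnerProductSpace

namespace Complex

theorem norm_add_eq_norm_sub_iff (a b : ℂ) : ‖a + b‖ = ‖a - b‖ ↔ (a * conj b).re = 0 := by
  rw [← sq_eq_sq₀ (norm_nonneg _) (norm_nonneg _), ← normSq_eq_norm_sq, ← normSq_eq_norm_sq,
    normSq_add, normSq_sub]
  constructor <;> intro h <;> linarith

theorem re_add_mul_conj_sub (a b : ℂ) : ((a + b) * conj (a - b)).re = ‖a‖ ^ 2 - ‖b‖ ^ 2 := by
  simp only [← normSq_eq_norm_sq, normSq_apply, mul_re, add_re, add_im, conj_re, conj_im, sub_re,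
    sub_im]
  ring

theorem exists_norm_eq_one_im_mul_eq_zero (z : ℂ) : ∃ c : ℂ, ‖c‖ = 1 ∧ (c * z).im = 0 := by
  refine ⟨exp (↑(-z.arg) * I), norm_exp_ofReal_mul_I _, ?_⟩
  conv_lhs => rw [← norm_mul_exp_arg_mul_I z, mul_left_comm, ← exp_add]
  simp

theorem eq_one_or_eq_neg_one_of_norm_eq_one_of_im_eq_zero {c : ℂ} (hc : ‖c‖ = 1)
    (him : c.im = 0) : c = 1 ∨ c = -1 := by
  obtain ⟨r, rfl⟩ : ∃ r : ℝ, c = r := ⟨c.re, ext rfl him⟩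
  rw [norm_real, Real.norm_eq_abs] at hc
  rcases abs_eq zero_le_one |>.mp hc with rfl | rfl <;> simp

end Complex

section InnerProductSpace

variable {E ι : Type*} [NormedAddCommGroup E] [InnerProductSpace ℂ E]

theorem im_inner_self (x : E) : (⟪x, x⟫_ℂ).im = 0 := inner_self_im (𝕜 := ℂ) x

theorem im_inner_add_sub (x y : E) : (⟪x + y, x - y⟫_ℂ).im = -2 * (⟪x, y⟫_ℂ).im := by
  rw [inner_add_left, inner_sub_right, inner_sub_right, ← inner_conj_symm x y]
  simp only [Complex.add_im, Complex.sub_im, Complex.conj_im, im_inner_self]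
  ring

theorem eq_or_eq_neg_of_eq_smul_of_im_inner_eq_zero {x y : E} {c : ℂ} (hc : ‖c‖ = 1)
    (hxy : x = c • y) (him : (⟪x, y⟫_ℂ).im = 0) : x = y ∨ x = -y := by
  subst hxy
  rcases eq_or_ne y 0 with rfl | hy
  · simp
  have hc_im : c.im = 0 := by
    rw [inner_smul_left, Complex.mul_im, im_inner_self, Complex.conj_im, mul_zero, zero_add,
      neg_mul, neg_eq_zero] at him
    exact (mul_eq_zero.mp him).resolve_right (re_inner_self_pos (𝕜 := ℂ) |>.mpr hy).ne'
  rcases Complex.eq_one_or_eq_neg_one_of_norm_eq_one_of_im_eq_zero hc hc_im with rfl | rfl <;>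
    simp

/-- Mathlib's inner product is conjugate-linear in its first argument, so `⟪f k, x⟫_ℂ` is the
conjugate of the measurement `⟨x, f_k⟩`. -/
def IsPhaseRetrievable (f : ι → E) : Prop :=
  ∀ x y : E, (∀ k, ‖⟪f k, x⟫_ℂ‖ = ‖⟪f k, y⟫_ℂ‖) → ∃ c : ℂ, ‖c‖ = 1 ∧ x = c • y

theorem isPhaseRetrievable_iff_eq_or_eq_neg (f : ι → E) :
    IsPhaseRetrievable f ↔ ∀ x y : E, (∀ k, ‖⟪f k, x⟫_ℂ‖ = ‖⟪f k, y⟫_ℂ‖) → (⟪x, y⟫_ℂ).im = 0 →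
      x = y ∨ x = -y := by
  refine ⟨fun hf x y hxy him => ?_, fun hf x y hxy => ?_⟩
  · obtain ⟨c, hc, rfl⟩ := hf x y hxy
    exact eq_or_eq_neg_of_eq_smul_of_im_inner_eq_zero hc rfl him
  · obtain ⟨c, hc, him⟩ := Complex.exists_norm_eq_one_im_mul_eq_zero ⟪x, y⟫_ℂ
    have hxcy : ∀ k, ‖⟪f k, x⟫_ℂ‖ = ‖⟪f k, c • y⟫_ℂ‖ := by
      simpa [inner_smul_right, hc] using hxy
    rcases hf x (c • y) hxcy (by rwa [inner_smul_right]) with h | h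
    · exact ⟨c, hc, h⟩
    · exact ⟨-c, by rwa [norm_neg], by rw [h, neg_smul]⟩

theorem isPhaseRetrievable_iff_not_exists (f : ι → E) :
    IsPhaseRetrievable f ↔ ¬ ∃ u v : E, u ≠ 0 ∧ v ≠ 0 ∧ (⟪u, v⟫_ℂ).im = 0 ∧
      ∀ k, (⟪f k, u⟫_ℂ * conj ⟪f k, v⟫_ℂ).re = 0 := by
  rw [isPhaseRetrievable_iff_eq_or_eq_neg]
  constructor
  · rintro hf ⟨u, v, hu, hv, him, hre⟩
    have hmod : ∀ k, ‖⟪f k, u + v⟫_ℂ‖ = ‖⟪f k, u - v⟫_ℂ‖ := fun k => by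
      rw [inner_add_right, inner_sub_right, Complex.norm_add_eq_norm_sub_iff, hre]
    rcases hf _ _ hmod (by rw [im_inner_add_sub, him, mul_zero]) with h | h
    · have h2v : (2 : ℂ) • v = 0 := by linear_combination (norm := module) h
      exact hv ((smul_eq_zero_iff_right two_ne_zero).mp h2v)
    · have h2u : (2 : ℂ) • u = 0 := by linear_combination (norm := module) h
      exact hu ((smul_eq_zero_iff_right two_ne_zero).mp h2u)
  · intro h x y hxy him
    by_contra! hne
    refine h ⟨x + y, x - y, fun h0 => hne.2 (eq_neg_of_add_eq_zero_left h0),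
      sub_ne_zero.mpr hne.1, by rw [im_inner_add_sub, him, mul_zero], fun k => ?_⟩
    rw [inner_add_right, inner_sub_right, Complex.re_add_mul_conj_sub, hxy, sub_self]

end InnerProductSpace

theorem cip_eq_inner {n : ℕ} (x y : Fin n → ℂ) :
    cip x y = ⟪WithLp.toLp 2 y, WithLp.toLp 2 x⟫_ℂ := by
  simp [cip, PiLp.inner_apply]

theorem im_inner_toLp_eq_zero_iff {n : ℕ} (u v : Fin n → ℂ) :
    (⟪WithLp.toLp 2 u, WithLp.toLp 2 v⟫_ℂ).im = 0 ↔ (cip u v).im = 0 := by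
  rw [cip_eq_inner, ← inner_conj_symm, Complex.conj_im, neg_eq_zero]

theorem complex_phase_retrieval_iff {n m : ℕ} (f : Fin m → (Fin n → ℂ)) :
    (∀ x y : Fin n → ℂ,
      (∀ k, ‖cip x (f k)‖ = ‖cip y (f k)‖) →
      ∃ c : ℂ, ‖c‖ = 1 ∧ x = c • y) ↔
    ¬ ∃ u v : Fin n → ℂ, u ≠ 0 ∧ v ≠ 0 ∧ (cip u v).im = 0 ∧
      ∀ k, (cip u (f k) * starRingEnd ℂ (cip v (f k))).re = 0 := by
  have h := isPhaseRetrievable_iff_not_exists (fun k => WithLp.toLp 2 (f k))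
  simp only [IsPhaseRetrievable, (WithLp.equiv 2 (Fin n → ℂ)).forall_congr_left,
    (WithLp.equiv 2 (Fin n → ℂ)).exists_congr_left, WithLp.equiv_symm_apply, ne_eq,
    WithLp.toLp_eq_zero, im_inner_toLp_eq_zero_iff] at h
  simpa only [← cip_eq_inner, ← WithLp.toLp_smul, (WithLp.toLp_injective 2).eq_iff] using h
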